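/- Let α : ℝ³ → ℝ³ be a smooth map whose Jacobian is everywhere symmetric, i.e. ∂_i α_j = ∂_j α_i on ℝ³ for all i,j (so that the one-form α_i dx^i is closed). Define the bracket {f,g}(x) = ⟨α(x), ∇f(x) × ∇g(x)⟩ on smooth functions. Then this bracket satisfies the Jacobi identity {{f,g},h} + {{g,h},f} + {{h,f},g} = 0 for all smooth f,g,h : ℝ³ → ℝ; that is, the bivector P^{ij} = ε^{ijk}α_k obtained from a closed one-form is a Poisson bivector. -/

import Mathlib

/-!
Expanding the brackets with the Leibniz rule, the terms carrying second derivatives of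
`f`, `g`, `h` cancel in the cyclic sum by Clairaut's theorem, and what remains is
`{{f,g},h} + {{g,h},f} + {{h,f},g} = ⟨α, curl α⟩ · det(∇f, ∇g, ∇h)` for any differentiable `α`.
A closed one-form has vanishing curl.
-/

open scoped ContDiff

noncomputable section

/-- Partial derivative in the `i`-th coordinate direction. -/
def pd (i : Fin 3) (f : (Fin 3 → ℝ) → ℝ) : (Fin 3 → ℝ) → ℝ :=
  fun x => fderiv ℝ f x (Pi.single i 1)

/-- Gradient of a function on ℝ³. -/
def grad (f : (Fin 3 → ℝ) → ℝ) (x : Fin 3 → ℝ) : Fin 3 → ℝ :=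
  fun i => pd i f x

/-- Cross product on ℝ³. -/
def cross (u v : Fin 3 → ℝ) : Fin 3 → ℝ :=
  ![u 1 * v 2 - u 2 * v 1, u 2 * v 0 - u 0 * v 2, u 0 * v 1 - u 1 * v 0]

/-- Euclidean inner product on ℝ³. -/
def dot (u v : Fin 3 → ℝ) : ℝ := ∑ i, u i * v i

/-- The bracket {f,g}(x) = ⟨α(x), ∇f(x) × ∇g(x)⟩ of the bivector P^{ij} = ε^{ijk}α_k. -/
def pb (α : (Fin 3 → ℝ) → (Fin 3 → ℝ)) (f g : (Fin 3 → ℝ) → ℝ) : (Fin 3 → ℝ) → ℝ :=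
  fun x => dot (α x) (cross (grad f x) (grad g x))

lemma differentiable_pd {f : (Fin 3 → ℝ) → ℝ} (hf : ContDiff ℝ 2 f) (i : Fin 3) :
    Differentiable ℝ (pd i f) :=
  ((hf.fderiv_right (m := 1) (by norm_num)).clm_apply contDiff_const).differentiable one_ne_zero

lemma pd_pd_comm {f : (Fin 3 → ℝ) → ℝ} (hf : ContDiff ℝ 2 f) (i j : Fin 3) (x : Fin 3 → ℝ) :
    pd i (pd j f) x = pd j (pd i f) x := by
  have hd : DifferentiableAt ℝ (fderiv ℝ f) x :=
    (hf.fderiv_right (m := 1) (by norm_num)).differentiable one_ne_zero x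
  have hsymm : IsSymmSndFDerivAt ℝ f x := hf.contDiffAt.isSymmSndFDerivAt (by simp)
  have hsnd (u v : Fin 3 → ℝ) :
      fderiv ℝ (fun y => fderiv ℝ f y v) x u = fderiv ℝ (fderiv ℝ f) x u v := by
    rw [fderiv_clm_apply hd (differentiableAt_const v)]
    simp
  change fderiv ℝ (fun y => fderiv ℝ f y _) x _ = fderiv ℝ (fun y => fderiv ℝ f y _) x _
  rw [hsnd, hsnd]
  exact hsymm _ _

section Leibniz

variable {p q : (Fin 3 → ℝ) → ℝ} {x : Fin 3 → ℝ}

lemma pd_add (hp : DifferentiableAt ℝ p x) (hq : DifferentiableAt ℝ q x) (m : Fin 3) :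
    pd m (fun y => p y + q y) x = pd m p x + pd m q x := by
  simp [pd, fderiv_fun_add hp hq]

lemma pd_sub (hp : DifferentiableAt ℝ p x) (hq : DifferentiableAt ℝ q x) (m : Fin 3) :
    pd m (fun y => p y - q y) x = pd m p x - pd m q x := by
  simp [pd, fderiv_fun_sub hp hq]

lemma pd_mul (hp : DifferentiableAt ℝ p x) (hq : DifferentiableAt ℝ q x) (m : Fin 3) :
    pd m (fun y => p y * q y) x = pd m p x * q x + p x * pd m q x := by
  simp only [pd, fderiv_fun_mul hp hq, add_apply, smul_apply, smul_eq_mul]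
  ring

end Leibniz

lemma pb_eq (α : (Fin 3 → ℝ) → (Fin 3 → ℝ)) (f g : (Fin 3 → ℝ) → ℝ) :
    pb α f g = fun x =>
      α x 0 * (pd 1 f x * pd 2 g x - pd 2 f x * pd 1 g x)
      + α x 1 * (pd 2 f x * pd 0 g x - pd 0 f x * pd 2 g x)
      + α x 2 * (pd 0 f x * pd 1 g x - pd 1 f x * pd 0 g x) := by
  ext x
  simp [pb, dot, cross, grad, Fin.sum_univ_three]

lemma pd_pb {α : (Fin 3 → ℝ) → (Fin 3 → ℝ)} {f g : (Fin 3 → ℝ) → ℝ}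
    (hα : Differentiable ℝ α) (hf : ContDiff ℝ 2 f) (hg : ContDiff ℝ 2 g)
    (m : Fin 3) (x : Fin 3 → ℝ) :
    pd m (pb α f g) x =
      dot (fun k => pd m (fun y => α y k) x) (cross (grad f x) (grad g x))
      + dot (α x) (cross (fun i => pd m (pd i f) x) (grad g x))
      + dot (α x) (cross (grad f x) (fun i => pd m (pd i g) x)) := by
  have hA (k : Fin 3) : DifferentiableAt ℝ (fun y => α y k) x :=
    differentiableAt_pi.mp (hα x) k
  have hF (i : Fin 3) : DifferentiableAt ℝ (pd i f) x := differentiable_pd hf i x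
  have hG (i : Fin 3) : DifferentiableAt ℝ (pd i g) x := differentiable_pd hg i x
  rw [pb_eq]
  simp (disch := fun_prop) only [pd_add, pd_sub, pd_mul]
  simp only [dot, cross, grad, Fin.sum_univ_three, Matrix.cons_val_zero, Matrix.cons_val_one,
    Matrix.cons_val]
  ring

def curl (α : (Fin 3 → ℝ) → (Fin 3 → ℝ)) (x : Fin 3 → ℝ) : Fin 3 → ℝ :=
  ![pd 1 (fun y => α y 2) x - pd 2 (fun y => α y 1) x,
    pd 2 (fun y => α y 0) x - pd 0 (fun y => α y 2) x,
    pd 0 (fun y => α y 1) x - pd 1 (fun y => α y 0) x]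

theorem jacobiator_eq {α : (Fin 3 → ℝ) → (Fin 3 → ℝ)} {f g h : (Fin 3 → ℝ) → ℝ}
    (hα : Differentiable ℝ α) (hf : ContDiff ℝ 2 f) (hg : ContDiff ℝ 2 g) (hh : ContDiff ℝ 2 h)
    (x : Fin 3 → ℝ) :
    pb α (pb α f g) h x + pb α (pb α g h) f x + pb α (pb α h f) g x =
      dot (α x) (curl α x) * dot (grad f x) (cross (grad g x) (grad h x)) := by
  simp only [pb, dot, cross, grad, pd_pb hα hf hg, pd_pb hα hg hh, pd_pb hα hh hf, curl,
    Fin.sum_univ_three, Matrix.cons_val_zero, Matrix.cons_val_one, Matrix.cons_val]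
  rw [pd_pd_comm hf 1 0, pd_pd_comm hf 2 0, pd_pd_comm hf 2 1,
    pd_pd_comm hg 1 0, pd_pd_comm hg 2 0, pd_pd_comm hg 2 1,
    pd_pd_comm hh 1 0, pd_pd_comm hh 2 0, pd_pd_comm hh 2 1]
  ring

lemma curl_eq_zero_of_closed {α : (Fin 3 → ℝ) → (Fin 3 → ℝ)} {x : Fin 3 → ℝ}
    (hclosed : ∀ i j : Fin 3, pd i (fun y => α y j) x = pd j (fun y => α y i) x) :
    curl α x = 0 := by
  ext i
  fin_cases i <;> simp [curl, hclosed]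

/-- **The bivector of a closed one-form is Poisson.**  If α : ℝ³ → ℝ³ is smooth with
everywhere symmetric Jacobian (∂ᵢα_j = ∂_jα_i, i.e. the one-form α_i dxⁱ is closed),
then the bracket {f,g} = ⟨α, ∇f × ∇g⟩ satisfies the Jacobi identity for all smooth
f, g, h. -/
theorem jacobi_of_closed_one_form
    (α : (Fin 3 → ℝ) → (Fin 3 → ℝ)) (hα : ContDiff ℝ ∞ α)
    (hclosed : ∀ (i j : Fin 3) (x : Fin 3 → ℝ),
      pd i (fun y => α y j) x = pd j (fun y => α y i) x) :
    ∀ f g h : (Fin 3 → ℝ) → ℝ, ContDiff ℝ ∞ f → ContDiff ℝ ∞ g → ContDiff ℝ ∞ h →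
      ∀ x, pb α (pb α f g) h x + pb α (pb α g h) f x + pb α (pb α h f) g x = 0 := by
  intro f g h hf hg hh x
  have h2 := ENat.LEInfty.out (m := 2)
  rw [jacobiator_eq (hα.differentiable (by simp)) (hf.of_le h2) (hg.of_le h2) (hh.of_le h2),
    curl_eq_zero_of_closed (hclosed · · x)]
  simp [dot]

end
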